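/- Let N ≥ 1 and c > 0. There exists a constant C > 0 depending only on N and c such that for every T > 0 and every bounded measurable function g : (0,T] × ℝ^N → ℝ, the function u(t,x) = ∫₀ᵗ ∫_{ℝ^N} ∇Φ_{c(t−s)}(x−y) g(s,y) dy ds satisfies ‖u‖_{E_T} ≤ C T sup_{(s,y)∈(0,T]×ℝ^N} |g(s,y)|. -/

import Mathlib

open MeasureTheory

/-- The heat kernel `Φ_τ(z) = (4πτ)^{−N/2} exp(−|z|²/(4τ))` on `ℝ^N`. -/
noncomputable def heatKernel (N : ℕ) (τ : ℝ) (z : EuclideanSpace ℝ (Fin N)) : ℝ :=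
  (4 * Real.pi * τ) ^ (-(N : ℝ) / 2) * Real.exp (-‖z‖ ^ 2 / (4 * τ))

/-- The spatial gradient `∇Φ_τ(z) = −(z/(2τ)) Φ_τ(z)` of the heat kernel. -/
noncomputable def gradHeatKernel (N : ℕ) (τ : ℝ) (z : EuclideanSpace ℝ (Fin N)) :
    EuclideanSpace ℝ (Fin N) :=
  (-(1 / (2 * τ)) * heatKernel N τ z) • z

/-- The Koch–Tataru norm
`‖u‖_{E_T} = sup_{0<t≤T} √t ‖u(t,·)‖_∞ +
 (sup_{x, 0<t≤T} t^{−N/2} ∫₀ᵗ ∫_{B(x,√t)} |u(s,y)|² dy ds)^{1/2}`. -/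
noncomputable def kochTataruNorm (N : ℕ) (T : ℝ)
    (u : ℝ → EuclideanSpace ℝ (Fin N) → EuclideanSpace ℝ (Fin N)) : ℝ :=
  (⨆ t : Set.Ioc (0 : ℝ) T,
      Real.sqrt (t : ℝ) * ⨆ x : EuclideanSpace ℝ (Fin N), ‖u (t : ℝ) x‖) +
  Real.sqrt (⨆ p : Set.Ioc (0 : ℝ) T × EuclideanSpace ℝ (Fin N),
      ((p.1 : ℝ) ^ (-(N : ℝ) / 2)) *
        ∫ s in Set.Ioc (0 : ℝ) (p.1 : ℝ),
          ∫ y in Metric.ball p.2 (Real.sqrt (p.1 : ℝ)), ‖u s y‖ ^ 2)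


open Real Set Metric

lemma hk_pos {N : ℕ} {τ : ℝ} (hτ : 0 < τ) (z : EuclideanSpace ℝ (Fin N)) :
    0 < heatKernel N τ z := by
  unfold heatKernel
  have : 0 < 4 * Real.pi * τ := by positivity
  positivity

lemma integrable_exp_nsq (N : ℕ) {a : ℝ} (ha : 0 < a) :
    Integrable (fun z : EuclideanSpace ℝ (Fin N) => Real.exp (-(a * ‖z‖ ^ 2))) := by
  have h := (GaussianFourier.integrable_cexp_neg_mul_sq_norm_add
      (V := EuclideanSpace ℝ (Fin N)) (b := (a : ℂ)) (by simpa using ha) 0 0).norm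
  refine h.congr (Filter.Eventually.of_forall fun v => ?_)
  simp [Complex.norm_exp]
  exact Or.inl (by norm_cast)

lemma integrable_norm_mul_exp (N : ℕ) {a : ℝ} (ha : 0 < a) :
    Integrable (fun z : EuclideanSpace ℝ (Fin N) => ‖z‖ * Real.exp (-(a * ‖z‖ ^ 2))) := by
  have h2 : (0:ℝ) < a/2 := by linarith
  refine ((integrable_exp_nsq N h2).const_mul ((Real.sqrt (a/2))⁻¹)).mono'
    ?_ (Filter.Eventually.of_forall fun z => ?_)
  · exact (continuous_norm.mul
      (Real.continuous_exp.comp (by continuity))).aestronglyMeasurable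
  · rw [Real.norm_of_nonneg (by positivity)]
    set r := ‖z‖ with hrdef
    have hr : 0 ≤ r := norm_nonneg z
    set s := Real.sqrt (a/2) with hsdef
    have hs : 0 < s := Real.sqrt_pos.2 h2
    have hs2 : s^2 = a/2 := Real.sq_sqrt h2.le
    have hu := Real.add_one_le_exp ((a/2)*r^2)
    have h1 : 2 * s * r ≤ 1 + (a/2) * r^2 := by nlinarith [sq_nonneg (s*r - 1)]
    have hsr : s * r ≤ Real.exp ((a/2)*r^2) := by nlinarith [mul_nonneg hs.le hr]
    have h4 : r ≤ s⁻¹ * Real.exp ((a/2)*r^2) := by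
      have h5 := mul_le_mul_of_nonneg_left hsr (le_of_lt (inv_pos.2 hs))
      rwa [← mul_assoc, inv_mul_cancel₀ hs.ne', one_mul] at h5
    calc r * Real.exp (-(a * r^2))
        = (r * Real.exp (-(a/2*r^2))) * Real.exp (-(a/2*r^2)) := by
          rw [mul_assoc, ← Real.exp_add]; ring_nf
      _ ≤ s⁻¹ * Real.exp (-(a/2*r^2)) := by
          refine mul_le_mul_of_nonneg_right ?_ (Real.exp_pos _).le
          rw [Real.exp_neg]
          calc r * (Real.exp (a/2*r^2))⁻¹ ≤ (s⁻¹ * Real.exp (a/2*r^2)) * (Real.exp (a/2*r^2))⁻¹ :=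
                mul_le_mul_of_nonneg_right h4 (by positivity)
            _ = s⁻¹ := by rw [mul_assoc, mul_inv_cancel₀ (Real.exp_ne_zero _), mul_one]

lemma integrable_norm_mul_hk (N : ℕ) {τ : ℝ} (hτ : 0 < τ) :
    Integrable (fun z : EuclideanSpace ℝ (Fin N) => ‖z‖ * heatKernel N τ z) := by
  have h : (fun z : EuclideanSpace ℝ (Fin N) => ‖z‖ * heatKernel N τ z)
      = fun z => (4*Real.pi*τ) ^ (-(N:ℝ)/2) * (‖z‖ * Real.exp (-((1/(4*τ)) * ‖z‖^2))) := by
    funext z; unfold heatKernel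
    have : -‖z‖^2/(4*τ) = -(1/(4*τ) * ‖z‖^2) := by field_simp
    rw [this]; ring
  rw [h]
  exact (integrable_norm_mul_exp N (by positivity)).const_mul _

lemma integral_norm_mul_hk (N : ℕ) {τ : ℝ} (hτ : 0 < τ) :
    ∫ z : EuclideanSpace ℝ (Fin N), ‖z‖ * heatKernel N τ z
      = Real.sqrt τ * ∫ z : EuclideanSpace ℝ (Fin N), ‖z‖ * heatKernel N 1 z := by
  have hsp : 0 < Real.sqrt τ := Real.sqrt_pos.2 hτ
  have h := Measure.integral_comp_smul (volume : Measure (EuclideanSpace ℝ (Fin N)))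
      (fun z => ‖z‖ * heatKernel N τ z) (Real.sqrt τ)
  have hcomp : ∀ w : EuclideanSpace ℝ (Fin N),
      ‖Real.sqrt τ • w‖ * heatKernel N τ (Real.sqrt τ • w)
        = (Real.sqrt τ * τ ^ (-(N:ℝ)/2)) * (‖w‖ * heatKernel N 1 w) := by
    intro w
    have hnorm : ‖Real.sqrt τ • w‖ = Real.sqrt τ * ‖w‖ := by
      rw [norm_smul, Real.norm_of_nonneg hsp.le]
    unfold heatKernel
    rw [hnorm]
    have he : -(Real.sqrt τ * ‖w‖)^2/(4*τ) = -‖w‖^2/(4*1) := by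
      rw [mul_pow, Real.sq_sqrt hτ.le]; field_simp
    rw [he]
    have hc : (4*Real.pi*τ) ^ (-(N:ℝ)/2) = (4*Real.pi*1) ^ (-(N:ℝ)/2) * τ ^ (-(N:ℝ)/2) := by
      rw [mul_one, ← Real.mul_rpow (by positivity) hτ.le]
    rw [hc]; ring
  simp_rw [hcomp] at h
  rw [integral_const_mul] at h
  rw [finrank_euclideanSpace_fin, abs_of_nonneg (by positivity), smul_eq_mul] at h
  have hpow : (Real.sqrt τ)^N = τ ^ ((N:ℝ)/2) := by
    rw [Real.sqrt_eq_rpow, ← Real.rpow_natCast (τ ^ ((1:ℝ)/2)) N, ← Real.rpow_mul hτ.le]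
    congr 1; ring
  have hne : ((Real.sqrt τ)^N : ℝ) ≠ 0 := by positivity
  calc ∫ z : EuclideanSpace ℝ (Fin N), ‖z‖ * heatKernel N τ z
      = (Real.sqrt τ)^N * (((Real.sqrt τ)^N)⁻¹
          * ∫ z : EuclideanSpace ℝ (Fin N), ‖z‖ * heatKernel N τ z) := by
        rw [← mul_assoc, mul_inv_cancel₀ hne, one_mul]
    _ = (Real.sqrt τ)^N * (Real.sqrt τ * τ ^ (-(N:ℝ)/2)
          * ∫ z : EuclideanSpace ℝ (Fin N), ‖z‖ * heatKernel N 1 z) := by rw [← h]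
    _ = Real.sqrt τ * ∫ z : EuclideanSpace ℝ (Fin N), ‖z‖ * heatKernel N 1 z := by
        rw [← mul_assoc, hpow,
          show τ^((N:ℝ)/2) * (Real.sqrt τ * τ^(-(N:ℝ)/2))
            = τ^((N:ℝ)/2) * τ^(-(N:ℝ)/2) * Real.sqrt τ from by ring,
          ← Real.rpow_add hτ, show (N:ℝ)/2 + -(N:ℝ)/2 = 0 from by ring,
          Real.rpow_zero, one_mul]

lemma norm_grad_eq {N : ℕ} {τ : ℝ} (hτ : 0 < τ) (z : EuclideanSpace ℝ (Fin N)) :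
    ‖gradHeatKernel N τ z‖ = (1/(2*τ)) * (‖z‖ * heatKernel N τ z) := by
  unfold gradHeatKernel
  rw [norm_smul, Real.norm_eq_abs, abs_mul, abs_neg,
    abs_of_nonneg (hk_pos hτ z).le, abs_of_nonneg (by positivity : (0:ℝ) ≤ 1/(2*τ))]
  ring

lemma integrable_norm_grad (N : ℕ) {τ : ℝ} (hτ : 0 < τ) :
    Integrable (fun z : EuclideanSpace ℝ (Fin N) => ‖gradHeatKernel N τ z‖) := by
  have : (fun z : EuclideanSpace ℝ (Fin N) => ‖gradHeatKernel N τ z‖)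
      = fun z => (1/(2*τ)) * (‖z‖ * heatKernel N τ z) := funext (norm_grad_eq hτ)
  rw [this]
  exact (integrable_norm_mul_hk N hτ).const_mul _

lemma integral_norm_grad (N : ℕ) {τ : ℝ} (hτ : 0 < τ) :
    ∫ z : EuclideanSpace ℝ (Fin N), ‖gradHeatKernel N τ z‖
      = (∫ z : EuclideanSpace ℝ (Fin N), ‖z‖ * heatKernel N 1 z) / (2 * Real.sqrt τ) := by
  simp_rw [norm_grad_eq hτ]
  rw [integral_const_mul, integral_norm_mul_hk N hτ]
  set M := ∫ z : EuclideanSpace ℝ (Fin N), ‖z‖ * heatKernel N 1 z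
  have hss : Real.sqrt τ * Real.sqrt τ = τ := Real.mul_self_sqrt hτ.le
  have hsp : 0 < Real.sqrt τ := Real.sqrt_pos.2 hτ
  rw [eq_div_iff (by positivity : (2:ℝ) * Real.sqrt τ ≠ 0)]
  rw [show 1/(2*τ) * (Real.sqrt τ * M) * (2*Real.sqrt τ)
      = Real.sqrt τ * Real.sqrt τ * M * τ⁻¹ from by ring, hss]
  rw [mul_comm τ M, mul_assoc, mul_inv_cancel₀ hτ.ne', mul_one]

lemma integral_inv_sqrt_sub {t : ℝ} (ht : 0 < t) :
    ∫ s in Ioc (0:ℝ) t, (Real.sqrt (t - s))⁻¹ = 2 * Real.sqrt t := by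
  have hcong : ∀ s ∈ Ioc (0:ℝ) t, (Real.sqrt (t - s))⁻¹ = (t - s) ^ (-(1/2) : ℝ) := by
    intro s hs
    rw [Real.rpow_neg (by linarith [hs.2]), Real.sqrt_eq_rpow]
  rw [setIntegral_congr_fun measurableSet_Ioc hcong]
  rw [← intervalIntegral.integral_of_le ht.le]
  rw [intervalIntegral.integral_comp_sub_left (fun u => u ^ (-(1/2):ℝ)) t]
  rw [sub_self, sub_zero]
  rw [integral_rpow (Or.inl (by norm_num))]
  rw [Real.sqrt_eq_rpow]
  rw [Real.zero_rpow (by norm_num)]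
  norm_num
  ring
lemma integrableOn_inv_sqrt_sub {t : ℝ} (ht : 0 < t) :
    IntegrableOn (fun s => (Real.sqrt (t - s))⁻¹) (Ioc (0:ℝ) t) := by
  have h1 : IntervalIntegrable (fun u : ℝ => u ^ (-(1/2) : ℝ)) volume 0 t :=
    intervalIntegral.intervalIntegrable_rpow' (by norm_num)
  have h2 := (h1.comp_sub_left t).symm
  rw [sub_self, sub_zero] at h2
  rw [intervalIntegrable_iff_integrableOn_Ioc_of_le ht.le] at h2
  refine h2.congr_fun ?_ measurableSet_Ioc
  intro s hs
  have hts : (0:ℝ) ≤ t - s := by linarith [hs.2]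
  simp only
  rw [Real.rpow_neg hts, Real.sqrt_eq_rpow]

lemma grad_zero {N : ℕ} (z : EuclideanSpace ℝ (Fin N)) : gradHeatKernel N 0 z = 0 := by
  unfold gradHeatKernel
  norm_num

lemma M_nonneg (N : ℕ) : 0 ≤ ∫ z : EuclideanSpace ℝ (Fin N), ‖z‖ * heatKernel N 1 z :=
  integral_nonneg fun z => mul_nonneg (norm_nonneg z) (hk_pos one_pos z).le

lemma pointwise_bound (N : ℕ) {c : ℝ} (hc : 0 < c) {T : ℝ}
    {g : ℝ → EuclideanSpace ℝ (Fin N) → ℝ} {G : ℝ} (hG0 : 0 ≤ G)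
    (hg : ∀ s ∈ Ioc (0:ℝ) T, ∀ y, |g s y| ≤ G) {t : ℝ} (ht : t ∈ Ioc (0:ℝ) T)
    (x : EuclideanSpace ℝ (Fin N)) :
    ‖∫ s in Ioc (0:ℝ) t, ∫ y, g s y • gradHeatKernel N (c * (t - s)) (x - y)‖
      ≤ (∫ z : EuclideanSpace ℝ (Fin N), ‖z‖ * heatKernel N 1 z) / Real.sqrt c
          * G * Real.sqrt t := by
  set M := ∫ z : EuclideanSpace ℝ (Fin N), ‖z‖ * heatKernel N 1 z with hMdef
  have hM0 : 0 ≤ M := M_nonneg N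
  have hscp : 0 < Real.sqrt c := Real.sqrt_pos.2 hc
  set B : ℝ → ℝ := fun s => (G * M / (2 * Real.sqrt c)) * (Real.sqrt (t - s))⁻¹ with hBdef
  have hBint : IntegrableOn B (Ioc (0:ℝ) t) :=
    (integrableOn_inv_sqrt_sub ht.1).const_mul _
  have hstep : ∀ s ∈ Ioc (0:ℝ) t,
      ‖∫ y, g s y • gradHeatKernel N (c * (t - s)) (x - y)‖ ≤ B s := by
    intro s hs
    rcases eq_or_lt_of_le hs.2 with heq | hlt
    · -- s = t
      subst heq
      simp only [sub_self, mul_zero, grad_zero, smul_zero, integral_zero, norm_zero,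
        Real.sqrt_zero, inv_zero, mul_zero, hBdef]
      exact le_refl 0
    · -- s < t
      have hτ : 0 < c * (t - s) := by
        have : 0 < t - s := by linarith
        positivity
      calc ‖∫ y, g s y • gradHeatKernel N (c * (t - s)) (x - y)‖
          ≤ ∫ y, ‖g s y • gradHeatKernel N (c * (t - s)) (x - y)‖ :=
            norm_integral_le_integral_norm _
        _ ≤ ∫ y, G * ‖gradHeatKernel N (c * (t - s)) (x - y)‖ := by
            refine integral_mono_of_nonneg
              (Filter.Eventually.of_forall fun y => norm_nonneg _)
              (((integrable_comp_sub_left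
                  (fun z => ‖gradHeatKernel N (c * (t - s)) z‖) x).2
                  (integrable_norm_grad N hτ)).const_mul G)
              (Filter.Eventually.of_forall fun y => ?_)
            simp only
            rw [norm_smul, Real.norm_eq_abs]
            exact mul_le_mul_of_nonneg_right
              (hg s ⟨hs.1, le_trans hs.2 ht.2⟩ y) (norm_nonneg _)
        _ = G * ∫ z, ‖gradHeatKernel N (c * (t - s)) z‖ := by
            rw [integral_const_mul,
              integral_sub_left_eq_self (fun z => ‖gradHeatKernel N (c * (t - s)) z‖) volume x]
        _ = B s := by
            rw [integral_norm_grad N hτ, hBdef]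
            have h1 : Real.sqrt (c * (t - s)) = Real.sqrt c * Real.sqrt (t - s) :=
              Real.sqrt_mul hc.le _
            have h2 : 0 < Real.sqrt (t - s) := Real.sqrt_pos.2 (by linarith)
            rw [h1]
            simp only
            ring
  calc ‖∫ s in Ioc (0:ℝ) t, ∫ y, g s y • gradHeatKernel N (c * (t - s)) (x - y)‖
      ≤ ∫ s in Ioc (0:ℝ) t, ‖∫ y, g s y • gradHeatKernel N (c * (t - s)) (x - y)‖ :=
        norm_integral_le_integral_norm _
    _ ≤ ∫ s in Ioc (0:ℝ) t, B s := by
        refine integral_mono_of_nonneg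
          (Filter.Eventually.of_forall fun s => norm_nonneg _) hBint ?_
        rw [Filter.EventuallyLE, ae_restrict_iff' measurableSet_Ioc]
        exact Filter.Eventually.of_forall hstep
    _ = (G * M / (2 * Real.sqrt c)) * (2 * Real.sqrt t) := by
        rw [hBdef, integral_const_mul, integral_inv_sqrt_sub ht.1]
    _ = M / Real.sqrt c * G * Real.sqrt t := by ring

/-- The Duhamel term `u(t) = ∫₀ᵗ e^{c(t−s)Δ}∇g(s) ds`, written as
`u(t,x) = ∫₀ᵗ ∫ ∇Φ_{c(t−s)}(x−y) g(s,y) dy ds`, satisfies the Koch–Tataru estimate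
`‖u‖_{E_T} ≤ C T ‖g‖_{L^∞((0,T]×ℝ^N)}`, with `C` depending only on `N` and `c`. -/
theorem duhamel_gradient_kochTataru_bound (N : ℕ) (hN : 1 ≤ N) (c : ℝ) (hc : 0 < c) :
    ∃ C > (0 : ℝ), ∀ T > (0 : ℝ),
      ∀ g : ℝ → EuclideanSpace ℝ (Fin N) → ℝ, Measurable (Function.uncurry g) →
      ∀ G : ℝ, (∀ s ∈ Set.Ioc (0 : ℝ) T, ∀ y, |g s y| ≤ G) →
        kochTataruNorm N T (fun t x =>
          ∫ s in Set.Ioc (0 : ℝ) t, ∫ y, g s y • gradHeatKernel N (c * (t - s)) (x - y)) ≤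
          C * T * G := by
  classical
  set E := EuclideanSpace ℝ (Fin N)
  have hnt : Nontrivial E := by
    refine Module.nontrivial_of_finrank_pos (R := ℝ) ?_
    rw [finrank_euclideanSpace_fin]; omega
  set M := ∫ z : E, ‖z‖ * heatKernel N 1 z with hMdef
  have hM0 : 0 ≤ M := M_nonneg N
  set K := M / Real.sqrt c with hKdef
  have hK0 : 0 ≤ K := div_nonneg hM0 (Real.sqrt_nonneg c)
  set V := (volume (Metric.ball (0 : E) 1)).toReal with hVdef
  have hV0 : 0 ≤ V := ENNReal.toReal_nonneg
  refine ⟨K * (1 + Real.sqrt V) + 1, by positivity, ?_⟩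
  intro T hT g hgm G hG
  have hG0 : 0 ≤ G := le_trans (abs_nonneg _) (hG T ⟨hT, le_refl T⟩ 0)
  haveI hne : Nonempty (Set.Ioc (0:ℝ) T) := ⟨⟨T, hT, le_refl T⟩⟩
  set u : ℝ → E → E := fun t x =>
    ∫ s in Set.Ioc (0 : ℝ) t, ∫ y, g s y • gradHeatKernel N (c * (t - s)) (x - y) with hudef
  have hu : ∀ t ∈ Set.Ioc (0:ℝ) T, ∀ x, ‖u t x‖ ≤ K * G * Real.sqrt t := by
    intro t ht x
    exact pointwise_bound N hc hG0 hG ht x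
  have h1 : (⨆ t : Set.Ioc (0 : ℝ) T, Real.sqrt (t : ℝ) * ⨆ x : E, ‖u (t : ℝ) x‖)
      ≤ K * G * T := by
    apply ciSup_le
    rintro ⟨t, ht⟩
    have hsup : (⨆ x : E, ‖u t x‖) ≤ K * G * Real.sqrt t :=
      ciSup_le fun x => hu t ht x
    calc Real.sqrt t * ⨆ x : E, ‖u t x‖ ≤ Real.sqrt t * (K * G * Real.sqrt t) :=
          mul_le_mul_of_nonneg_left hsup (Real.sqrt_nonneg t)
      _ = K * G * t := by
          rw [show Real.sqrt t * (K * G * Real.sqrt t)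
            = K * G * (Real.sqrt t * Real.sqrt t) from by ring,
            Real.mul_self_sqrt ht.1.le]
      _ ≤ K * G * T := mul_le_mul_of_nonneg_left ht.2 (mul_nonneg hK0 hG0)
  have h2 : Real.sqrt (⨆ p : Set.Ioc (0 : ℝ) T × E,
      ((p.1 : ℝ) ^ (-(N : ℝ) / 2)) *
        ∫ s in Set.Ioc (0 : ℝ) (p.1 : ℝ),
          ∫ y in Metric.ball p.2 (Real.sqrt (p.1 : ℝ)), ‖u s y‖ ^ 2)
      ≤ K * Real.sqrt V * G * T := by
    have hb : (⨆ p : Set.Ioc (0 : ℝ) T × E,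
        ((p.1 : ℝ) ^ (-(N : ℝ) / 2)) *
          ∫ s in Set.Ioc (0 : ℝ) (p.1 : ℝ),
            ∫ y in Metric.ball p.2 (Real.sqrt (p.1 : ℝ)), ‖u s y‖ ^ 2)
        ≤ (K * Real.sqrt V * G * T)^2 := by
      apply ciSup_le
      rintro ⟨⟨t, ht⟩, x⟩
      simp only
      set A := K * G * Real.sqrt t with hAdef
      have hA0 : 0 ≤ A := by positivity
      have hvol : (volume (Metric.ball x (Real.sqrt t))).toReal
          = Real.sqrt t ^ N * V := by
        rw [Measure.addHaar_ball volume x (Real.sqrt_nonneg t),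
          finrank_euclideanSpace_fin, ENNReal.toReal_mul,
          ENNReal.toReal_ofReal (by positivity)]
      have hstepa : ∀ s ∈ Set.Ioc (0:ℝ) t,
          ∫ y in Metric.ball x (Real.sqrt t), ‖u s y‖ ^ 2
            ≤ (Real.sqrt t ^ N * V) * A^2 := by
        intro s hs
        have hsT : s ∈ Set.Ioc (0:ℝ) T := ⟨hs.1, hs.2.trans ht.2⟩
        have hb2 : ∀ y : E, ‖u s y‖^2 ≤ A^2 := by
          intro y
          have h3 : K * G * Real.sqrt s ≤ A :=
            mul_le_mul_of_nonneg_left (Real.sqrt_le_sqrt hs.2) (mul_nonneg hK0 hG0)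
          have h4 : ‖u s y‖ ≤ A := le_trans (hu s hsT y) h3
          nlinarith [norm_nonneg (u s y)]
        calc ∫ y in Metric.ball x (Real.sqrt t), ‖u s y‖ ^ 2
            ≤ ∫ _y in Metric.ball x (Real.sqrt t), A^2 := by
              refine integral_mono_of_nonneg
                (Filter.Eventually.of_forall fun y => by positivity)
                (integrableOn_const measure_ball_lt_top.ne)
                (Filter.Eventually.of_forall fun y => hb2 y)
          _ = (Real.sqrt t ^ N * V) * A^2 := by
              rw [setIntegral_const, smul_eq_mul, measureReal_def, hvol]
      have hstepb : ∫ s in Set.Ioc (0:ℝ) t,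
          ∫ y in Metric.ball x (Real.sqrt t), ‖u s y‖ ^ 2
            ≤ t * ((Real.sqrt t ^ N * V) * A^2) := by
        calc ∫ s in Set.Ioc (0:ℝ) t, ∫ y in Metric.ball x (Real.sqrt t), ‖u s y‖ ^ 2
            ≤ ∫ _s in Set.Ioc (0:ℝ) t, (Real.sqrt t ^ N * V) * A^2 := by
              refine integral_mono_of_nonneg
                (Filter.Eventually.of_forall fun s =>
                  integral_nonneg fun y => by positivity)
                (integrableOn_const measure_Ioc_lt_top.ne) ?_
              rw [Filter.EventuallyLE, ae_restrict_iff' measurableSet_Ioc]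
              exact Filter.Eventually.of_forall hstepa
          _ = t * ((Real.sqrt t ^ N * V) * A^2) := by
              rw [setIntegral_const, smul_eq_mul, measureReal_def, Real.volume_Ioc,
                ENNReal.toReal_ofReal (by linarith [ht.1] : (0:ℝ) ≤ t - 0), sub_zero]
      have hpow : (t:ℝ) ^ (-(N : ℝ) / 2) * Real.sqrt t ^ N = 1 := by
        rw [Real.sqrt_eq_rpow, ← Real.rpow_natCast (t ^ ((1:ℝ)/2)) N,
          ← Real.rpow_mul ht.1.le, ← Real.rpow_add ht.1,
          show -(N:ℝ)/2 + 1/(2:ℝ) * (N:ℝ) = 0 from by ring, Real.rpow_zero]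
      have hrp0 : (0:ℝ) ≤ (t:ℝ) ^ (-(N : ℝ) / 2) := Real.rpow_nonneg ht.1.le _
      calc (t:ℝ) ^ (-(N : ℝ) / 2) *
            ∫ s in Set.Ioc (0:ℝ) t, ∫ y in Metric.ball x (Real.sqrt t), ‖u s y‖ ^ 2
          ≤ (t:ℝ) ^ (-(N : ℝ) / 2) * (t * ((Real.sqrt t ^ N * V) * A^2)) :=
            mul_le_mul_of_nonneg_left hstepb hrp0
        _ = (t:ℝ) ^ (-(N : ℝ) / 2) * Real.sqrt t ^ N * (t * V * A^2) := by ring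
        _ = t * V * A^2 := by rw [hpow, one_mul]
        _ = V * K^2 * G^2 * t^2 := by
            rw [hAdef, show (K * G * Real.sqrt t)^2
              = K^2 * G^2 * (Real.sqrt t * Real.sqrt t) from by ring,
              Real.mul_self_sqrt ht.1.le]
            ring
        _ ≤ (K * Real.sqrt V * G * T)^2 := by
            have hVs : Real.sqrt V ^ 2 = V := Real.sq_sqrt hV0
            have htT : t^2 ≤ T^2 := by nlinarith [ht.1.le, ht.2]
            calc V * K^2 * G^2 * t^2 ≤ V * K^2 * G^2 * T^2 := by
                  exact mul_le_mul_of_nonneg_left htT (by positivity)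
              _ = (K * Real.sqrt V * G * T)^2 := by rw [show (K * Real.sqrt V * G * T)^2 = Real.sqrt V ^2 * K^2 * G^2 * T^2 from by ring, hVs]
    calc Real.sqrt _ ≤ Real.sqrt ((K * Real.sqrt V * G * T)^2) := Real.sqrt_le_sqrt hb
      _ = K * Real.sqrt V * G * T := Real.sqrt_sq (by positivity)
  have heq : kochTataruNorm N T u = _ + _ := rfl
  rw [heq]
  refine le_trans (add_le_add h1 h2) ?_
  nlinarith [mul_nonneg hT.le hG0, mul_nonneg (mul_nonneg hK0 (Real.sqrt_nonneg V)) (mul_nonneg hT.le hG0)]
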